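/- arXiv:1404.2447 — 2 statements merged into one kernel-verified Lean document; each statement's English description precedes it below -/
import Mathlib

section
/- Let O be the ring of integers of a number field, 𝔭 a nonzero prime ideal with residue field of cardinality q, and f ≥ 1. Then the order of the symplectic group Sp_{2n}(O/𝔭^f) equals q^{(2n²+n)(f-1)} · |Sp_{2n}(F_q)|. -/
open scoped Classical
open Matrix

noncomputable def qPoch (q : ℝ) (j : ℕ) : ℝ := ∏ i ∈ Finset.range j, (1 - q⁻¹ ^ (i + 1))
noncomputable def qPochInf (q : ℝ) : ℝ := ∏' i : ℕ, (1 - q⁻¹ ^ (i + 1))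

/-- The standard symplectic form matrix `J = [[0,1],[-1,0]]`. -/
def Jmat (n : ℕ) (R : Type) [CommRing R] : Matrix (Fin n ⊕ Fin n) (Fin n ⊕ Fin n) R :=
  Matrix.fromBlocks 0 1 (-1) 0

/-- The symplectic group `Sp_{2n}(R) = {h ∈ GL_{2n}(R) : hᵀ J h = J}` as a subset of `GL`. -/
def SpSet (n : ℕ) (R : Type) [CommRing R] :
    Set (Matrix.GeneralLinearGroup (Fin n ⊕ Fin n) R) :=
  {h | (h : Matrix (Fin n ⊕ Fin n) (Fin n ⊕ Fin n) R)ᵀ * Jmat n R * h = Jmat n R}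

/-- The `m`-th symplectic group `Sp_{2n}^{(m)}(O/𝔭^f)`:
matrices `h ∈ GL_{2n}(O/𝔭^f)` with `hᵀ J h ≡ J (mod 𝔭^m)`. -/
noncomputable def SpmSet (n : ℕ) {O : Type} [CommRing O] (𝔭 : Ideal O) (f m : ℕ) (h : m ≤ f) :
    Set (Matrix.GeneralLinearGroup (Fin n ⊕ Fin n) (O ⧸ 𝔭 ^ f)) :=
  {A | (Ideal.Quotient.factor (S := 𝔭 ^ f) (T := 𝔭 ^ m) (Ideal.pow_le_pow_right h)).mapMatrix
        ((A : Matrix (Fin n ⊕ Fin n) (Fin n ⊕ Fin n) (O ⧸ 𝔭 ^ f))ᵀ * Jmat n (O ⧸ 𝔭 ^ f) *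
          (A : Matrix (Fin n ⊕ Fin n) (Fin n ⊕ Fin n) (O ⧸ 𝔭 ^ f)))
      = (Ideal.Quotient.factor (S := 𝔭 ^ f) (T := 𝔭 ^ m)
          (Ideal.pow_le_pow_right h)).mapMatrix (Jmat n (O ⧸ 𝔭 ^ f))}

/-!
Let `φ : R → R'` be a surjection of commutative rings whose kernel squares to zero. Reduction
`Sp_{2n}(R) → Sp_{2n}(R')` is then surjective: lift `h` to any matrix `B`; the defect
`Bᵀ J B - J` is alternating with entries in `ker φ`, hence of the form `T - Tᵀ` with `T` taking
values in `ker φ`, and `B (1 + J T)` is symplectic and still lifts `h`. The kernel consists of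
the `1 + J S` with `S` symmetric with entries in `ker φ`, so
`|Sp_{2n}(R)| = |ker φ|^{n(2n+1)} |Sp_{2n}(R')|`. For `O/𝔭^{m+1} → O/𝔭^m` with `m ≥ 1` the kernel
`𝔭^m/𝔭^{m+1}` squares to zero and has `q` elements by multiplicativity of the ideal norm;
induction on `f` gives the formula.
-/

section SquareZeroKernel

variable {ι R R' : Type*} [Fintype ι] [DecidableEq ι] [CommRing R] [CommRing R'] {φ : R →+* R'}

theorem RingHom.mapMatrix_eq_zero_iff {M : Matrix ι ι R} :
    φ.mapMatrix M = 0 ↔ ∀ i j, M i j ∈ RingHom.ker φ := by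
  simp [← Matrix.ext_iff]

theorem RingHom.mapMatrix_transpose (M : Matrix ι ι R) : φ.mapMatrix Mᵀ = (φ.mapMatrix M)ᵀ :=
  transpose_map.symm

theorem RingHom.isUnit_of_isUnit_map (hφ : Function.Surjective φ)
    (hsq : ∀ x ∈ RingHom.ker φ, ∀ y ∈ RingHom.ker φ, x * y = 0) {x : R} (hx : IsUnit (φ x)) :
    IsUnit x := by
  obtain ⟨w, hw⟩ := hφ ↑hx.unit⁻¹
  have hz : x * w - 1 ∈ RingHom.ker φ := by simp [RingHom.mem_ker, hw]
  have : IsUnit (x * w - 1 + 1) := IsNilpotent.isUnit_add_one ⟨2, by rw [sq]; exact hsq _ hz _ hz⟩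
  exact isUnit_of_mul_isUnit_left (by simpa using this)

theorem Matrix.mul_eq_zero_of_mapMatrix_eq_zero
    (hsq : ∀ x ∈ RingHom.ker φ, ∀ y ∈ RingHom.ker φ, x * y = 0) {M N : Matrix ι ι R}
    (hM : φ.mapMatrix M = 0) (hN : φ.mapMatrix N = 0) : M * N = 0 := by
  rw [RingHom.mapMatrix_eq_zero_iff] at hM hN
  ext i j
  exact Finset.sum_eq_zero fun k _ => hsq _ (hM i k) _ (hN k j)

theorem Matrix.isUnit_one_add_of_mapMatrix_eq_zero
    (hsq : ∀ x ∈ RingHom.ker φ, ∀ y ∈ RingHom.ker φ, x * y = 0) {N : Matrix ι ι R}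
    (hN : φ.mapMatrix N = 0) : IsUnit (1 + N) :=
  IsNilpotent.isUnit_one_add ⟨2, by rw [sq]; exact mul_eq_zero_of_mapMatrix_eq_zero hsq hN hN⟩

theorem Matrix.one_add_transpose_mul_add_mul_one_add
    (hsq : ∀ x ∈ RingHom.ker φ, ∀ y ∈ RingHom.ker φ, x * y = 0) (M : Matrix ι ι R)
    {E N : Matrix ι ι R} (hE : φ.mapMatrix E = 0) (hN : φ.mapMatrix N = 0) :
    (1 + N)ᵀ * (M + E) * (1 + N) = M + E + (Nᵀ * M + M * N) := by
  have hNt : φ.mapMatrix Nᵀ = 0 := by rw [RingHom.mapMatrix_transpose, hN, transpose_zero]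
  have hMN : φ.mapMatrix (M * N) = 0 := by rw [map_mul, hN, mul_zero]
  calc (1 + N)ᵀ * (M + E) * (1 + N)
      = M + E + (Nᵀ * M + M * N) + (Nᵀ * E + E * N + Nᵀ * (M * N) + Nᵀ * (E * N)) := by
        rw [transpose_add, transpose_one]; noncomm_ring
    _ = M + E + (Nᵀ * M + M * N) := by
        simp only [mul_eq_zero_of_mapMatrix_eq_zero hsq hNt hE,
          mul_eq_zero_of_mapMatrix_eq_zero hsq hE hN, mul_eq_zero_of_mapMatrix_eq_zero hsq hNt hMN,
          mul_zero, add_zero]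

theorem Matrix.exists_sub_transpose_eq {E : Matrix ι ι R} (hskew : Eᵀ = -E)
    (hdiag : ∀ i, E i i = 0) (hE : φ.mapMatrix E = 0) :
    ∃ T : Matrix ι ι R, T - Tᵀ = E ∧ φ.mapMatrix T = 0 := by
  let : LinearOrder ι := IsWellOrder.linearOrder WellOrderingRel
  have hswap (i j : ι) : E j i = -E i j := by simpa using congr_fun (congr_fun hskew i) j
  refine ⟨of fun i j => if i < j then E i j else 0, ?_, ?_⟩
  · ext i j
    rcases lt_trichotomy i j with h | rfl | h
    · simp [h, h.not_gt]
    · simp [hdiag]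
    · simp [h, h.not_gt, hswap i j]
  · rw [RingHom.mapMatrix_eq_zero_iff] at hE ⊢
    intro i j
    simp only [of_apply]
    split_ifs
    exacts [hE i j, zero_mem _]

end SquareZeroKernel

section SymmetricMatrices

variable {ι R : Type*}

def Matrix.isSymmEquivSym2 (p : R → Prop) :
    {S : Matrix ι ι R // S.IsSymm ∧ ∀ i j, p (S i j)} ≃ (Sym2 ι → Subtype p) where
  toFun S := Sym2.lift
    ⟨fun i j => ⟨S.1 i j, S.2.2 i j⟩, fun i j => Subtype.ext (S.2.1.apply i j).symm⟩
  invFun g := ⟨of fun i j => g s(i, j), IsSymm.ext fun i j => by simp [Sym2.eq_swap],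
    fun i j => (g _).2⟩
  left_inv S := by ext; simp
  right_inv g := by funext z; induction z using Sym2.ind; simp

theorem Matrix.card_isSymm [Fintype ι] (p : R → Prop) :
    Nat.card {S : Matrix ι ι R // S.IsSymm ∧ ∀ i j, p (S i j)} =
      Nat.card (Subtype p) ^ (Fintype.card ι + 1).choose 2 := by
  rw [Nat.card_congr (isSymmEquivSym2 p), Nat.card_fun, Nat.card_eq_fintype_card (α := Sym2 ι),
    Sym2.card]

end SymmetricMatrices

section Symplectic

variable {R R' : Type} [CommRing R] [CommRing R'] {n : ℕ}

theorem Jmat_transpose : (Jmat n R)ᵀ = -Jmat n R := by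
  simp [Jmat, fromBlocks_transpose, fromBlocks_neg]

theorem Jmat_mul_Jmat : Jmat n R * Jmat n R = -1 := by
  simp [Jmat, fromBlocks_multiply, ← fromBlocks_one, fromBlocks_neg]

theorem RingHom.mapMatrix_Jmat (φ : R →+* R') : φ.mapMatrix (Jmat n R) = Jmat n R' := by
  rw [Jmat, Jmat, RingHom.mapMatrix_apply, fromBlocks_map]
  simp [Matrix.map_neg _ (map_neg φ), Matrix.map_one _ (map_zero φ) (map_one φ)]

theorem Jmat_apply_self (i : Fin n ⊕ Fin n) : Jmat n R i i = 0 := by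
  rcases i with i | i <;> simp [Jmat]

theorem dotProduct_Jmat_mulVec_self (x : Fin n ⊕ Fin n → R) : x ⬝ᵥ Jmat n R *ᵥ x = 0 := by
  rw [← Sum.elim_comp_inl_inr x, Jmat, fromBlocks_mulVec, sumElim_dotProduct_sumElim]
  simp [neg_mulVec, dotProduct_comm]

theorem transpose_mul_Jmat_mul_apply_self (B : Matrix (Fin n ⊕ Fin n) (Fin n ⊕ Fin n) R)
    (i : Fin n ⊕ Fin n) : (Bᵀ * Jmat n R * B) i i = 0 := by
  rw [mul_assoc, ← dotProduct_Jmat_mulVec_self (fun j => B j i)]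
  simp [mul_apply, dotProduct, mulVec]

theorem transpose_transpose_mul_Jmat_mul (B : Matrix (Fin n ⊕ Fin n) (Fin n ⊕ Fin n) R) :
    (Bᵀ * Jmat n R * B)ᵀ = -(Bᵀ * Jmat n R * B) := by
  simp [transpose_mul, Jmat_transpose, mul_assoc]

def spSubgroup (n : ℕ) (R : Type) [CommRing R] : Subgroup (GL (Fin n ⊕ Fin n) R) where
  carrier := SpSet n R
  one_mem' := by simp [SpSet]
  mul_mem' {A B} hA hB := by
    simp only [SpSet, Set.mem_ofPred_eq, Units.val_mul, transpose_mul] at *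
    calc B.valᵀ * A.valᵀ * Jmat n R * (A.val * B.val)
        = B.valᵀ * (A.valᵀ * Jmat n R * A.val) * B.val := by noncomm_ring
      _ = Jmat n R := by rw [hA, hB]
  inv_mem' {A} hA := by
    simp only [SpSet, Set.mem_ofPred_eq] at *
    calc A⁻¹.valᵀ * Jmat n R * A⁻¹.val
        = A⁻¹.valᵀ * (A.valᵀ * Jmat n R * A.val) * A⁻¹.val := by rw [hA]
      _ = (A.val * A⁻¹.val)ᵀ * Jmat n R * (A.val * A⁻¹.val) := by
          rw [transpose_mul]; noncomm_ring
      _ = Jmat n R := by simp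

theorem mem_spSubgroup {A : GL (Fin n ⊕ Fin n) R} :
    A ∈ spSubgroup n R ↔ A.valᵀ * Jmat n R * A.val = Jmat n R := Iff.rfl

theorem map_mem_spSubgroup (φ : R →+* R') {A : GL (Fin n ⊕ Fin n) R} (hA : A ∈ spSubgroup n R) :
    GeneralLinearGroup.map φ A ∈ spSubgroup n R' := by
  rw [mem_spSubgroup] at *
  change (φ.mapMatrix A.val)ᵀ * Jmat n R' * φ.mapMatrix A.val = Jmat n R'
  rw [← RingHom.mapMatrix_transpose, ← RingHom.mapMatrix_Jmat φ, ← map_mul, ← map_mul, hA]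

def spMap (φ : R →+* R') : spSubgroup n R →* spSubgroup n R' :=
  ((GeneralLinearGroup.map φ).domRestrict (spSubgroup n R)).codRestrict (spSubgroup n R')
    fun A => map_mem_spSubgroup φ A.2

theorem spMap_apply_val_val (φ : R →+* R') (A : spSubgroup n R) :
    (spMap φ A).val.val = φ.mapMatrix A.val.val := rfl

end Symplectic

section Reduction

variable {R R' : Type} [CommRing R] [CommRing R'] {n : ℕ} {φ : R →+* R'}

theorem Jmat_mul_Jmat_mul (M : Matrix (Fin n ⊕ Fin n) (Fin n ⊕ Fin n) R) :
    Jmat n R * (Jmat n R * M) = -M := by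
  rw [← mul_assoc, Jmat_mul_Jmat, neg_one_mul]

theorem one_add_transpose_mul_Jmat_mul_one_add_eq_Jmat_iff
    (hsq : ∀ x ∈ RingHom.ker φ, ∀ y ∈ RingHom.ker φ, x * y = 0)
    {N : Matrix (Fin n ⊕ Fin n) (Fin n ⊕ Fin n) R} (hN : φ.mapMatrix N = 0) :
    (1 + N)ᵀ * Jmat n R * (1 + N) = Jmat n R ↔ (Jmat n R * N).IsSymm := by
  have h := one_add_transpose_mul_add_mul_one_add hsq (Jmat n R) (map_zero φ.mapMatrix) hN
  simp only [add_zero] at h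
  rw [h, add_eq_left, IsSymm, transpose_mul, Jmat_transpose, Matrix.mul_neg, neg_eq_iff_add_eq_zero]

theorem mem_ker_spMap {A : spSubgroup n R} : A ∈ (spMap φ).ker ↔ φ.mapMatrix A.val.val = 1 := by
  rw [MonoidHom.mem_ker, Subtype.ext_iff, Units.ext_iff]
  rfl

noncomputable def kerSpMapEquiv (hsq : ∀ x ∈ RingHom.ker φ, ∀ y ∈ RingHom.ker φ, x * y = 0) :
    (spMap (n := n) φ).ker ≃
      {S : Matrix (Fin n ⊕ Fin n) (Fin n ⊕ Fin n) R //
        S.IsSymm ∧ ∀ i j, S i j ∈ RingHom.ker φ} where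
  toFun A := ⟨Jmat n R * (1 - A.val.val.val), by
    have hA : φ.mapMatrix A.val.val.val = 1 := mem_ker_spMap.1 A.2
    have hN : φ.mapMatrix (A.val.val.val - 1) = 0 := by rw [map_sub, hA, map_one, sub_self]
    have hsp := mem_spSubgroup.1 A.val.2
    rw [← add_sub_cancel (1 : Matrix _ _ R) A.val.val.val,
      one_add_transpose_mul_Jmat_mul_one_add_eq_Jmat_iff hsq hN] at hsp
    refine ⟨by rw [← neg_sub, Matrix.mul_neg]; exact hsp.neg, ?_⟩
    rw [← RingHom.mapMatrix_eq_zero_iff, map_mul, map_sub, hA, map_one, sub_self, mul_zero]⟩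
  invFun S :=
    have hN : φ.mapMatrix (Jmat n R * S.val) = 0 := by
      rw [map_mul, RingHom.mapMatrix_eq_zero_iff.2 S.2.2, mul_zero]
    ⟨⟨(isUnit_one_add_of_mapMatrix_eq_zero hsq hN).unit, by
      rw [mem_spSubgroup, IsUnit.unit_spec,
        one_add_transpose_mul_Jmat_mul_one_add_eq_Jmat_iff hsq hN, Jmat_mul_Jmat_mul]
      exact S.2.1.neg⟩, by
      rw [mem_ker_spMap]
      change φ.mapMatrix (1 + Jmat n R * S.val) = 1
      rw [map_add, hN, map_one, add_zero]⟩
  left_inv A := by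
    apply Subtype.ext; apply Subtype.ext; apply Units.ext
    change 1 + Jmat n R * (Jmat n R * (1 - A.val.val.val)) = A.val.val.val
    rw [Jmat_mul_Jmat_mul, neg_sub, add_sub_cancel]
  right_inv S := by
    apply Subtype.ext
    change Jmat n R * (1 - (1 + Jmat n R * S.val)) = S.val
    rw [sub_add_cancel_left, Matrix.mul_neg, Jmat_mul_Jmat_mul, neg_neg]

theorem spMap_surjective (hφ : Function.Surjective φ)
    (hsq : ∀ x ∈ RingHom.ker φ, ∀ y ∈ RingHom.ker φ, x * y = 0) :
    Function.Surjective (spMap (n := n) φ) := by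
  rintro ⟨B', hB'⟩
  obtain ⟨g, hg⟩ := hφ.hasRightInverse
  set B := B'.val.map g
  have hB : φ.mapMatrix B = B'.val := by ext; exact hg _
  have hBunit : IsUnit B := by
    rw [isUnit_iff_isUnit_det]
    refine φ.isUnit_of_isUnit_map hφ hsq ?_
    rw [RingHom.map_det, hB]
    exact (isUnit_iff_isUnit_det _).mp B'.isUnit
  set E := Bᵀ * Jmat n R * B - Jmat n R with hEdef
  have hE : φ.mapMatrix E = 0 := by
    rw [map_sub, map_mul, map_mul, RingHom.mapMatrix_transpose, hB, RingHom.mapMatrix_Jmat,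
      mem_spSubgroup.1 hB', sub_self]
  have hEskew : Eᵀ = -E := by
    rw [transpose_sub, transpose_transpose_mul_Jmat_mul, Jmat_transpose, neg_sub_neg, neg_sub]
  have hEdiag (i) : E i i = 0 := by
    rw [hEdef, Matrix.sub_apply, transpose_mul_Jmat_mul_apply_self, Jmat_apply_self, sub_zero]
  obtain ⟨T, hTE, hT⟩ := exists_sub_transpose_eq hEskew hEdiag hE
  have hN : φ.mapMatrix (Jmat n R * T) = 0 := by rw [map_mul, hT, mul_zero]
  refine ⟨⟨hBunit.unit * (isUnit_one_add_of_mapMatrix_eq_zero hsq hN).unit, ?_⟩, ?_⟩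
  · rw [mem_spSubgroup]
    change (B * (1 + Jmat n R * T))ᵀ * Jmat n R * (B * (1 + Jmat n R * T)) = Jmat n R
    calc (B * (1 + Jmat n R * T))ᵀ * Jmat n R * (B * (1 + Jmat n R * T))
        = (1 + Jmat n R * T)ᵀ * (Jmat n R + E) * (1 + Jmat n R * T) := by
          rw [hEdef, transpose_mul]; noncomm_ring
      _ = Jmat n R + E + ((Jmat n R * T)ᵀ * Jmat n R + Jmat n R * (Jmat n R * T)) :=
          one_add_transpose_mul_add_mul_one_add hsq _ hE hN
      _ = Jmat n R := by
          rw [transpose_mul, Jmat_transpose, Jmat_mul_Jmat_mul, Matrix.mul_neg, neg_mul, mul_assoc,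
            Jmat_mul_Jmat, mul_neg_one, neg_neg, ← hTE]
          abel
  · apply Subtype.ext; apply Units.ext
    change φ.mapMatrix (B * (1 + Jmat n R * T)) = B'.val
    rw [map_mul, map_add, hN, map_one, add_zero, mul_one, hB]

theorem card_SpSet_eq_of_surjective (hφ : Function.Surjective φ)
    (hsq : ∀ x ∈ RingHom.ker φ, ∀ y ∈ RingHom.ker φ, x * y = 0) :
    Nat.card (SpSet n R) =
      Nat.card (RingHom.ker φ) ^ (n * (2 * n + 1)) * Nat.card (SpSet n R') := by
  have hdim : (Fintype.card (Fin n ⊕ Fin n) + 1).choose 2 = n * (2 * n + 1) := by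
    rw [Fintype.card_sum, Fintype.card_fin, Nat.choose_two_right]
    exact Nat.div_eq_of_eq_mul_left two_pos (by rw [Nat.add_sub_cancel]; ring)
  calc Nat.card (SpSet n R) = Nat.card (spSubgroup n R) := rfl
    _ = Nat.card (spMap (n := n) φ).ker * Nat.card (spSubgroup n R') := by
      rw [(spMap φ).ker.card_eq_card_quotient_mul_card_subgroup, mul_comm, Nat.card_congr
        (QuotientGroup.quotientKerEquivOfSurjective _ (spMap_surjective hφ hsq)).toEquiv]
    _ = _ := by rw [Nat.card_congr (kerSpMapEquiv hsq), card_isSymm, hdim]; rfl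

end Reduction

theorem RingHom.card_eq_card_ker_mul_card_of_surjective {R R' : Type*} [CommRing R] [CommRing R']
    {φ : R →+* R'} (hφ : Function.Surjective φ) :
    Nat.card R = Nat.card (RingHom.ker φ) * Nat.card R' := by
  rw [Submodule.card_eq_card_quotient_mul_card (RingHom.ker φ),
    Nat.card_congr (RingHom.quotientKerEquivOfSurjective hφ).toEquiv]

theorem Ideal.Quotient.factorPowSucc_mul_eq_zero {S : Type*} [CommRing S] (I : Ideal S) {m : ℕ}
    (hm : 1 ≤ m) : ∀ x ∈ RingHom.ker (factorPowSucc I m), ∀ y ∈ RingHom.ker (factorPowSucc I m),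
      x * y = 0 := by
  intro x hx y hy
  obtain ⟨a, rfl⟩ := Ideal.Quotient.mk_surjective x
  obtain ⟨b, rfl⟩ := Ideal.Quotient.mk_surjective y
  rw [RingHom.mem_ker, factor_mk, eq_zero_iff_mem] at hx hy
  rw [← map_mul, eq_zero_iff_mem]
  exact Ideal.pow_le_pow_right (by omega) (pow_add I m m ▸ Ideal.mul_mem_mul hx hy)

section NumberRing

variable {S : Type*} [CommRing S] [IsDedekindDomain S] [Module.Free ℤ S]

theorem Ideal.card_quotient_pow (I : Ideal S) (k : ℕ) :
    Nat.card (S ⧸ I ^ k) = Nat.card (S ⧸ I) ^ k := by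
  simpa [Ideal.absNorm_apply, Submodule.cardQuot_apply] using map_pow Ideal.absNorm I k

theorem Ideal.Quotient.card_ker_factorPowSucc [Module.Finite ℤ S] {I : Ideal S} (hI : I ≠ ⊥)
    (m : ℕ) : Nat.card (RingHom.ker (factorPowSucc I m)) = Nat.card (S ⧸ I) := by
  have hq : Nat.card (S ⧸ I) ≠ 0 := by
    rw [← Submodule.cardQuot_apply, ← Ideal.absNorm_apply]
    exact Ideal.absNorm_eq_zero_iff.not.2 hI
  have h := RingHom.card_eq_card_ker_mul_card_of_surjective (φ := factorPowSucc I m)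
    (factor_surjective _)
  rw [Ideal.card_quotient_pow, Ideal.card_quotient_pow, pow_succ'] at h
  exact (Nat.eq_of_mul_eq_mul_right (pow_pos (Nat.pos_of_ne_zero hq) m) h).symm

end NumberRing

theorem card_Sp_quotient_pow_general (K : Type) [Field K] [NumberField K]
    (𝔭 : Ideal (NumberField.RingOfIntegers K)) (hbot : 𝔭 ≠ ⊥)
    (f n : ℕ) (hf : 1 ≤ f) (q : ℕ) (hq : q = Nat.card (NumberField.RingOfIntegers K ⧸ 𝔭)) :
    Nat.card (SpSet n (NumberField.RingOfIntegers K ⧸ 𝔭 ^ f)) =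
      q ^ ((2 * n ^ 2 + n) * (f - 1)) *
        Nat.card (SpSet n (NumberField.RingOfIntegers K ⧸ 𝔭)) := by
  subst hq
  induction f, hf using Nat.le_induction with
  | base => rw [pow_one, Nat.sub_self, mul_zero, pow_zero, one_mul]
  | succ m hm ih =>
    rw [card_SpSet_eq_of_surjective (Ideal.Quotient.factor_surjective _)
        (Ideal.Quotient.factorPowSucc_mul_eq_zero 𝔭 hm),
      Ideal.Quotient.card_ker_factorPowSucc hbot, ih, ← mul_assoc, ← pow_add]
    obtain ⟨k, rfl⟩ := Nat.exists_eq_add_of_le' hm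
    congr 2
    simp only [Nat.add_sub_cancel]
    ring

/-- `|Sp_{2n}(O/𝔭^f)| = q^{(2n²+n)(f-1)} · |Sp_{2n}(F_q)|` where `q = |O/𝔭|`. -/
theorem card_Sp_quotient_pow (K : Type) [Field K] [NumberField K]
    (𝔭 : Ideal (NumberField.RingOfIntegers K)) (hprime : 𝔭.IsPrime) (hbot : 𝔭 ≠ ⊥)
    (f n : ℕ) (hf : 1 ≤ f) (q : ℕ) (hq : q = Nat.card (NumberField.RingOfIntegers K ⧸ 𝔭)) :
    Nat.card (SpSet n (NumberField.RingOfIntegers K ⧸ 𝔭 ^ f)) =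
      q ^ ((2 * n ^ 2 + n) * (f - 1)) *
        Nat.card (SpSet n (NumberField.RingOfIntegers K ⧸ 𝔭)) :=
  card_Sp_quotient_pow_general K 𝔭 hbot f n hf q hq
end

section
/- Let 𝒫 be the set of isomorphism classes of finite abelian p-groups. For Z, G ∈ 𝒫, the following identity holds: Σ_{H∈𝒫} |{H₁ ≤ H : H₁ ≅ Z and H/H₁ ≅ G}| / |Aut(H)| = 1/(|Aut(Z)| · |Aut(G)|). -/
open scoped Classical
open Matrix

/-- A bundled finite abelian `p`-group. -/
structure FinAbPGroup (p : ℕ) : Type 1 where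
  carrier : Type
  [addCommGroup : AddCommGroup carrier]
  [finite : Finite carrier]
  card_isPPow : ∃ k : ℕ, Nat.card carrier = p ^ k

attribute [instance] FinAbPGroup.addCommGroup FinAbPGroup.finite

instance FinAbPGroup.isoSetoid (p : ℕ) : Setoid (FinAbPGroup p) where
  r G H := Nonempty (G.carrier ≃+ H.carrier)
  iseqv := ⟨fun _ => ⟨AddEquiv.refl _⟩, fun ⟨e⟩ => ⟨e.symm⟩, fun ⟨e⟩ ⟨f⟩ => ⟨e.trans f⟩⟩

/-- Isomorphism classes of finite abelian `p`-groups. -/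
def FinAbPGroupClass (p : ℕ) := Quotient (FinAbPGroup.isoSetoid p)

/-- A representative of each isomorphism class. -/
noncomputable def FinAbPGroupClass.rep {p : ℕ} (c : FinAbPGroupClass p) : FinAbPGroup p :=
  Quotient.out c

/-- The order of the automorphism group. -/
noncomputable def FinAbPGroup.autCard {p : ℕ} (G : FinAbPGroup p) : ℕ :=
  Nat.card (G.carrier ≃+ G.carrier)

/-- The number of subgroups `H₁ ≤ H` with `H₁ ≅ Z` and `H/H₁ ≅ G`. -/
noncomputable def subCount {p : ℕ} (H Z G : FinAbPGroup p) : ℕ :=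
  Nat.card {H₁ : AddSubgroup H.carrier //
    Nonempty (H₁ ≃+ Z.carrier) ∧ Nonempty ((H.carrier ⧸ H₁) ≃+ G.carrier)}

/-!
Count pairs `(f, φ)` where `f` is a normalized symmetric 2-cocycle of `G` with values in `Z`
and `φ : E_f ≃+ H` identifies the extension group it defines with `H`. Such pairs are the same as
short exact sequences `0 → Z → H → G → 0` together with a set-theoretic section `s` with
`s 0 = 0`. Counting these in two ways gives, for every `H`,
`subCount H Z G · |Aut Z| · |Aut G| · |Z| ^ (|G| - 1) = #{f | E_f ≅ H} · |Aut H|`.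
Dividing by `|Aut H|` and summing over `H`, every cocycle is counted exactly once, and there are
`|Z| ^ (|G| - 1)` of them: on a cyclic group a cocycle is determined by `f 1`, on a product by its
restrictions to the two factors and to pairs of axes, and every finite abelian group is a product
of cyclic groups.
-/

open Finset

lemma Nat.card_subtype_ne {α : Type*} [Finite α] (a : α) :
    Nat.card {x : α // x ≠ a} = Nat.card α - 1 := by
  have := Fintype.ofFinite α
  simp only [Nat.card_eq_fintype_card]
  exact Set.card_ne_eq a

lemma Nat.card_subtype_apply_eq {α β : Type*} [Finite α] (a : α) (b : β) :
    Nat.card {f : α → β // f a = b} = Nat.card β ^ (Nat.card α - 1) := by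
  let e : {f : α → β // f a = b} ≃ {x : β × ({j // j ≠ a} → β) // x.1 = b} :=
    (Equiv.funSplitAt a β).subtypeEquiv fun _ => Iff.rfl
  rw [Nat.card_congr (e.trans (Equiv.prodSubtypeFstEquivSubtypeProd (p := (· = b)))),
    Nat.card_prod, Nat.card_unique, one_mul, Nat.card_fun, Nat.card_subtype_ne]

lemma Nat.card_addEquiv_eq_card_aut {M N : Type*} [Add M] [Add N] (h : Nonempty (M ≃+ N)) :
    Nat.card (M ≃+ N) = Nat.card (N ≃+ N) := by
  obtain ⟨e⟩ := h
  exact Nat.card_congr ⟨e.symm.trans, e.trans, fun σ => by ext; simp, fun τ => by ext; simp⟩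

lemma Nat.card_sigma_of_card_eq_of_nonempty {ι : Type*} [Finite ι] (F : ι → Type*)
    [∀ i, Finite (F i)] (c : ℕ) (h : ∀ i, Nonempty (F i) → Nat.card (F i) = c) :
    Nat.card (Σ i, F i) = Nat.card {i // Nonempty (F i)} * c := by
  have := Fintype.ofFinite ι
  have hF (i : ι) : Nat.card (F i) = if Nonempty (F i) then c else 0 := by
    split_ifs with hi
    · exact h i hi
    · have := not_nonempty_iff.mp hi
      exact Nat.card_of_isEmpty
  rw [Nat.card_sigma, Fintype.sum_congr _ _ hF, ← sum_filter, sum_const, smul_eq_mul,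
    Nat.card_eq_fintype_card, Fintype.card_subtype]

lemma hasSum_natCard_fiber {R α β : Type*} [AddCommMonoidWithOne R] [TopologicalSpace R]
    [Finite α] (q : α → β) : HasSum (fun b => (Nat.card {a // q a = b} : R)) (Nat.card α) := by
  have := Fintype.ofFinite α
  have hzero (b : β) (hb : b ∉ univ.image q) : (Nat.card {a // q a = b} : R) = 0 := by
    have : IsEmpty {a // q a = b} := ⟨fun ⟨a, ha⟩ => hb (ha ▸ mem_image_of_mem q (mem_univ a))⟩
    simp
  convert hasSum_sum_of_ne_finset_zero (L := .unconditional β) hzero using 1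
  rw [Nat.card_eq_fintype_card, ← card_univ, card_eq_sum_card_image q]
  push_cast
  simp [Nat.card_eq_fintype_card, Fintype.card_subtype]

structure IsSymmCocycle {A Z : Type*} [AddCommGroup A] [AddCommGroup Z] (f : A → A → Z) :
    Prop where
  zero_left : ∀ y, f 0 y = 0
  comm : ∀ x y, f x y = f y x
  add_assoc : ∀ x y z, f x y + f (x + y) z = f y z + f x (y + z)

abbrev SymmCocycle (A Z : Type*) [AddCommGroup A] [AddCommGroup Z] :=
  {f : A → A → Z // IsSymmCocycle f}

section SymmCocycle

variable {A B Z : Type*} [AddCommGroup A] [AddCommGroup B] [AddCommGroup Z]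

lemma IsSymmCocycle.zero_right {f : A → A → Z} (hf : IsSymmCocycle f) (x : A) : f x 0 = 0 := by
  rw [hf.comm, hf.zero_left]

lemma IsSymmCocycle.comp_addMonoidHom {f : A → A → Z} (hf : IsSymmCocycle f) (φ : B →+ A) :
    IsSymmCocycle fun x y => f (φ x) (φ y) where
  zero_left y := by simp [hf.zero_left]
  comm x y := hf.comm _ _
  add_assoc x y z := by simpa using hf.add_assoc (φ x) (φ y) (φ z)

def SymmCocycle.comp (f : SymmCocycle A Z) (φ : B →+ A) : SymmCocycle B Z :=
  ⟨fun x y => f.1 (φ x) (φ y), f.2.comp_addMonoidHom φ⟩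

def SymmCocycle.congr (e : A ≃+ B) : SymmCocycle A Z ≃ SymmCocycle B Z where
  toFun f := f.comp e.symm.toAddMonoidHom
  invFun f := f.comp e.toAddMonoidHom
  left_inv f := by ext; simp [SymmCocycle.comp]
  right_inv f := by ext; simp [SymmCocycle.comp]

instance [Subsingleton A] : Unique (SymmCocycle A Z) where
  default := ⟨fun _ _ => 0, fun _ => rfl, fun _ _ => rfl, fun _ _ _ => rfl⟩
  uniq f := Subtype.ext <| funext fun x => by
    rw [Subsingleton.elim x 0]
    exact funext f.2.zero_left

lemma IsSymmCocycle.eq_of_axes {f : A × B → A × B → Z} (hf : IsSymmCocycle f)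
    (a₁ a₂ : A) (b₁ b₂ : B) :
    f (a₁, b₁) (a₂, b₂) = f (a₁, 0) (a₂, 0) + f (0, b₁) (0, b₂)
      + f (a₁ + a₂, 0) (0, b₁ + b₂) - f (a₁, 0) (0, b₁) - f (a₂, 0) (0, b₂) := by
  have E₁ := hf.add_assoc (a₁, b₁) (a₂, 0) (0, b₂)
  have E₂ := hf.add_assoc (0, b₁) (a₁, 0) (a₂, 0)
  have E₃ := hf.add_assoc (a₁ + a₂, 0) (0, b₁) (0, b₂)
  simp only [Prod.mk_add_mk, add_zero, zero_add] at E₁ E₂ E₃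
  rw [hf.comm (0, b₁), hf.comm (0, b₁)] at E₂
  linear_combination (norm := abel) -E₁ + E₂ + E₃

def prodCocycle (f₁ : A → A → Z) (f₂ : B → B → Z) (β : A → B → Z) : A × B → A × B → Z :=
  fun x y => f₁ x.1 y.1 + f₂ x.2 y.2 + β (x.1 + y.1) (x.2 + y.2) - β x.1 x.2 - β y.1 y.2

lemma isSymmCocycle_prodCocycle {f₁ : A → A → Z} {f₂ : B → B → Z} {β : A → B → Z}
    (h₁ : IsSymmCocycle f₁) (h₂ : IsSymmCocycle f₂) (hβ : β 0 0 = 0) :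
    IsSymmCocycle (prodCocycle f₁ f₂ β) where
  zero_left y := by simp [prodCocycle, h₁.zero_left, h₂.zero_left, hβ]
  comm x y := by
    simp only [prodCocycle, h₁.comm x.1, h₂.comm x.2, add_comm x.1, add_comm x.2]
    abel
  add_assoc x y z := by
    simp only [prodCocycle, Prod.fst_add, Prod.snd_add, add_assoc]
    linear_combination (norm := abel) h₁.add_assoc x.1 y.1 z.1 + h₂.add_assoc x.2 y.2 z.2

def SymmCocycle.prodEquiv :
    SymmCocycle (A × B) Z ≃ SymmCocycle A Z × SymmCocycle B Z ×
      {β : A → B → Z // (∀ b, β 0 b = 0) ∧ ∀ a, β a 0 = 0} where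
  toFun f := ⟨f.comp (AddMonoidHom.inl A B), f.comp (AddMonoidHom.inr A B),
    ⟨fun a b => f.1 (a, 0) (0, b), fun _ => f.2.zero_left _, fun _ => f.2.zero_right _⟩⟩
  invFun t := ⟨prodCocycle t.1.1 t.2.1.1 t.2.2.1,
    isSymmCocycle_prodCocycle t.1.2 t.2.1.2 (t.2.2.2.1 0)⟩
  left_inv f := Subtype.ext <| funext fun x => funext fun y => (f.2.eq_of_axes _ _ _ _).symm
  right_inv := fun ⟨⟨f₁, h₁⟩, ⟨f₂, h₂⟩, ⟨β, hβ₁, hβ₂⟩⟩ => by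
    refine Prod.ext (Subtype.ext ?_) (Prod.ext (Subtype.ext ?_) (Subtype.ext ?_)) <;>
      funext _ _ <;>
      simp [SymmCocycle.comp, prodCocycle, h₁.zero_left, h₁.zero_right, h₂.zero_left, hβ₁, hβ₂]

def biNormalizedEquiv :
    {β : A → B → Z // (∀ b, β 0 b = 0) ∧ ∀ a, β a 0 = 0} ≃
      {γ : A → {g : B → Z // g 0 = 0} // γ 0 = ⟨0, rfl⟩} where
  toFun β := ⟨fun a => ⟨β.1 a, β.2.2 a⟩, Subtype.ext (funext β.2.1)⟩
  invFun γ := ⟨fun a => (γ.1 a).1, fun b => congrFun (congrArg Subtype.val γ.2) b,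
    fun a => (γ.1 a).2⟩

lemma SymmCocycle.card_prod [Finite A] [Finite B] [Finite Z] :
    Nat.card (SymmCocycle (A × B) Z) = Nat.card (SymmCocycle A Z) * Nat.card (SymmCocycle B Z) *
      Nat.card Z ^ ((Nat.card B - 1) * (Nat.card A - 1)) := by
  rw [Nat.card_congr (prodEquiv.trans ((Equiv.refl _).prodCongr
      ((Equiv.refl _).prodCongr biNormalizedEquiv))),
    Nat.card_prod, Nat.card_prod, Nat.card_subtype_apply_eq, Nat.card_subtype_apply_eq, ← pow_mul,
    mul_assoc]

lemma SymmCocycle.card_prod_of_card [Finite A] [Finite B] [Finite Z]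
    (hA : Nat.card (SymmCocycle A Z) = Nat.card Z ^ (Nat.card A - 1))
    (hB : Nat.card (SymmCocycle B Z) = Nat.card Z ^ (Nat.card B - 1)) :
    Nat.card (SymmCocycle (A × B) Z) = Nat.card Z ^ (Nat.card (A × B) - 1) := by
  obtain ⟨a, ha⟩ := Nat.exists_eq_succ_of_ne_zero (Nat.card_pos (α := A)).ne'
  obtain ⟨b, hb⟩ := Nat.exists_eq_succ_of_ne_zero (Nat.card_pos (α := B)).ne'
  rw [card_prod, hA, hB, Nat.card_prod, ← pow_add, ← pow_add, ha, hb,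
    show (a + 1) * (b + 1) = a + b + b * a + 1 by ring]
  simp

section Cyclic

variable {m : ℕ} [NeZero m]

/-- The coboundary of `S`, computed on the representatives `x.val`; it is a cocycle on `ZMod m`
as soon as `S (n + m) = S n + S m`. -/
def zmodCocycle (S : ℕ → Z) : ZMod m → ZMod m → Z :=
  fun x y => S (x.val + y.val) - S x.val - S y.val

lemma isSymmCocycle_zmodCocycle {S : ℕ → Z} (h0 : S 0 = 0)
    (hS : ∀ n, S (n + m) = S n + S m) : IsSymmCocycle (zmodCocycle (m := m) S) := by
  have hper (n q : ℕ) : S (n + m * q) = S n + q • S m := by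
    induction q with
    | zero => simp
    | succ q ih => rw [mul_add_one, ← add_assoc, hS, ih, succ_nsmul, add_assoc]
  have carry (x y : ZMod m) (t : ℕ) : S (x.val + y.val + t) - S (x.val + y.val) =
      S ((x + y).val + t) - S (x + y).val := by
    have hval : x.val + y.val = (x + y).val + m * ((x.val + y.val) / m) := by
      rw [ZMod.val_add]
      exact (Nat.mod_add_div _ _).symm
    rw [hval, add_right_comm, hper, hper]
    abel
  refine ⟨fun y => by simp [zmodCocycle, h0],
    fun x y => by simp only [zmodCocycle, add_comm x.val]; abel, fun x y z => ?_⟩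
  have hxy := carry x y z.val
  have hyz := carry y z x.val
  simp only [zmodCocycle, add_comm x.val (y + z).val]
  rw [show x.val + y.val + z.val = y.val + z.val + x.val by ring] at hxy
  linear_combination (norm := abel) -hxy + hyz

lemma sum_range_natCast_zmod (g : ZMod m → Z) : ∑ i ∈ range m, g i = ∑ x, g x := by
  obtain ⟨k, rfl⟩ : ∃ k, m = k + 1 := ⟨m - 1, (Nat.sub_add_cancel NeZero.one_le).symm⟩
  rw [← Fin.sum_univ_eq_sum_range]
  exact Fintype.sum_congr _ _ fun i => congrArg g (Fin.cast_val_eq_self i)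

lemma sum_range_add_period (a : ZMod m → Z) (n : ℕ) :
    ∑ i ∈ range (n + m), a i = ∑ i ∈ range n, a i + ∑ i ∈ range m, a i := by
  rw [sum_range_add, sum_range_natCast_zmod a, ← Equiv.sum_comp (Equiv.addLeft (n : ZMod m)) a,
    ← sum_range_natCast_zmod]
  push_cast
  rfl

lemma IsSymmCocycle.ext_zmod {f g : ZMod m → ZMod m → Z} (hf : IsSymmCocycle f)
    (hg : IsSymmCocycle g) (h : f 1 = g 1) : f = g := by
  have key (j : ℕ) : f j = g j := by
    induction j with
    | zero => funext k; simp only [Nat.cast_zero, hf.zero_left, hg.zero_left]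
    | succ j ih =>
      funext k
      have hf' := hf.add_assoc j 1 k
      have hg' := hg.add_assoc j 1 k
      rw [hf.comm j 1, h, ih] at hf'
      rw [hg.comm j 1] at hg'
      push_cast
      linear_combination (norm := abel) hf' - hg'
  funext x
  simpa using key x.val

lemma zmodCocycle_one_left (hm : 1 < m) (a : ZMod m → Z) (ha : a 0 = 0) (k : ZMod m) :
    zmodCocycle (fun n => ∑ i ∈ range n, a i) 1 k = a k := by
  have : Fact (1 < m) := ⟨hm⟩
  simp [zmodCocycle, ZMod.val_one, add_comm 1, sum_range_succ, ha]

def symmCocycleZModEquiv (hm : 1 < m) :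
    SymmCocycle (ZMod m) Z ≃ {a : ZMod m → Z // a 0 = 0} where
  toFun f := ⟨f.1 1, f.2.zero_right 1⟩
  invFun a := ⟨zmodCocycle fun n => ∑ i ∈ range n, a.1 i,
    isSymmCocycle_zmodCocycle (sum_range_zero _) (sum_range_add_period a.1)⟩
  left_inv f := Subtype.ext <| IsSymmCocycle.ext_zmod (Subtype.property _) f.2
    (funext (zmodCocycle_one_left hm _ (f.2.zero_right 1)))
  right_inv a := Subtype.ext <| funext (zmodCocycle_one_left hm a.1 a.2)

lemma SymmCocycle.card_zmod [Finite Z] (hm : 1 < m) :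
    Nat.card (SymmCocycle (ZMod m) Z) = Nat.card Z ^ (m - 1) := by
  rw [Nat.card_congr (symmCocycleZModEquiv hm), Nat.card_subtype_apply_eq, Nat.card_zmod]

end Cyclic

lemma SymmCocycle.card_pi_zmod [Finite Z] (ι : Type) [Finite ι] :
    ∀ (n : ι → ℕ), (∀ i, 1 < n i) → Nat.card (SymmCocycle (∀ i, ZMod (n i)) Z) =
      Nat.card Z ^ (Nat.card (∀ i, ZMod (n i)) - 1) := by
  induction ι using Finite.induction_empty_option with
  | of_equiv e ih =>
    intro n hn
    let φ := (RingEquiv.piCongrLeft (fun i => ZMod (n i)) e).toAddEquiv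
    rw [← Nat.card_congr (SymmCocycle.congr φ), ← Nat.card_congr φ.toEquiv]
    exact ih _ fun i => hn (e i)
  | h_empty => simp
  | h_option ih =>
    intro n hn
    have : ∀ i, NeZero (n i) := fun i => ⟨(zero_lt_one.trans (hn i)).ne'⟩
    let φ := (RingEquiv.piOptionEquivProd (R := fun i => ZMod (n i))).toAddEquiv
    rw [Nat.card_congr (SymmCocycle.congr φ), Nat.card_congr φ.toEquiv]
    exact card_prod_of_card (by rw [card_zmod (hn none), Nat.card_zmod])
      (ih _ fun i => hn (some i))

theorem SymmCocycle.card [Finite A] [Finite Z] :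
    Nat.card (SymmCocycle A Z) = Nat.card Z ^ (Nat.card A - 1) := by
  obtain ⟨ι, _, n, hn, ⟨e⟩⟩ := AddCommGroup.equiv_directSum_zmod_of_finite' A
  let φ := e.trans (DirectSum.addEquivProd fun i => ZMod (n i))
  rw [Nat.card_congr (SymmCocycle.congr φ), Nat.card_congr φ.toEquiv]
  exact card_pi_zmod ι n hn

end SymmCocycle

section ShortExactSeq

variable {Z H A : Type*} [AddCommGroup Z] [AddCommGroup H] [AddCommGroup A]

@[ext]
structure ShortExactSeq (Z H A : Type*) [AddCommGroup Z] [AddCommGroup H] [AddCommGroup A] where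
  inl : Z →+ H
  proj : H →+ A
  inl_injective : Function.Injective inl
  proj_surjective : Function.Surjective proj
  exact : Function.Exact inl proj

@[ext]
structure SectionedShortExactSeq (Z H A : Type*) [AddCommGroup Z] [AddCommGroup H]
    [AddCommGroup A] extends ShortExactSeq Z H A where
  sec : A → H
  proj_sec : ∀ a, proj (sec a) = a
  sec_zero : sec 0 = 0

namespace ShortExactSeq

instance [Finite Z] [Finite H] [Finite A] : Finite (ShortExactSeq Z H A) :=
  have := DFunLike.finite (Z →+ H)
  have := DFunLike.finite (H →+ A)
  .of_injective (fun d => (d.inl, d.proj)) fun _ _ h =>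
    ShortExactSeq.ext (congrArg Prod.fst h) (congrArg Prod.snd h)

lemma range_inl (d : ShortExactSeq Z H A) : d.inl.range = d.proj.ker :=
  (AddMonoidHom.exact_iff.mp d.exact).symm

def ofSubgroup (H₁ : AddSubgroup H) (e : H₁ ≃+ Z) (q : (H ⧸ H₁) ≃+ A) :
    ShortExactSeq Z H A where
  inl := H₁.subtype.comp e.symm.toAddMonoidHom
  proj := q.toAddMonoidHom.comp (QuotientAddGroup.mk' H₁)
  inl_injective := H₁.subtype_injective.comp e.symm.injective
  proj_surjective := q.surjective.comp (QuotientAddGroup.mk'_surjective H₁)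
  exact h := by
    simp only [AddMonoidHom.coe_comp, Function.comp_apply, AddEquiv.coe_toAddMonoidHom,
      QuotientAddGroup.mk'_apply, map_eq_zero_iff _ q.injective, QuotientAddGroup.eq_zero_iff]
    exact ⟨fun hh => ⟨e ⟨h, hh⟩, by simp⟩, fun ⟨z, hz⟩ => hz ▸ (e.symm z).2⟩

lemma range_inl_ofSubgroup (H₁ : AddSubgroup H) (e : H₁ ≃+ Z) (q : (H ⧸ H₁) ≃+ A) :
    (ofSubgroup H₁ e q).inl.range = H₁ := by
  ext h
  exact ⟨fun ⟨z, hz⟩ => hz ▸ (e.symm z).2, fun hh => ⟨e ⟨h, hh⟩, by simp [ofSubgroup]⟩⟩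

lemma bijective_ofSubgroup :
    Function.Bijective fun x : Σ H₁ : AddSubgroup H, (H₁ ≃+ Z) × ((H ⧸ H₁) ≃+ A) =>
      ofSubgroup x.1 x.2.1 x.2.2 := by
  constructor
  · rintro ⟨H₁, e, q⟩ ⟨H₂, e', q'⟩ h
    dsimp only at h
    obtain rfl : H₁ = H₂ := by
      rw [← range_inl_ofSubgroup H₁ e q, ← range_inl_ofSubgroup H₂ e' q', h]
    obtain rfl : e = e' := by
      rw [← e.symm_symm, ← e'.symm_symm]
      congr 1
      ext z
      exact DFunLike.congr_fun (congrArg ShortExactSeq.inl h) z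
    obtain rfl : q = q' := by
      ext x
      obtain ⟨h', rfl⟩ := QuotientAddGroup.mk'_surjective H₁ x
      exact DFunLike.congr_fun (congrArg ShortExactSeq.proj h) h'
    rfl
  · intro d
    refine ⟨⟨d.inl.range, (AddMonoidHom.ofInjective d.inl_injective).symm,
      (QuotientAddGroup.quotientAddEquivOfEq d.range_inl).trans
        (QuotientAddGroup.quotientKerEquivOfSurjective d.proj d.proj_surjective)⟩, ?_⟩
    ext x
    · simp [ofSubgroup, AddMonoidHom.ofInjective_apply]
    · exact QuotientAddGroup.kerLift_mk d.proj x

lemma card_eq [Finite Z] [Finite H] [Finite A] :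
    Nat.card (ShortExactSeq Z H A) =
      Nat.card {H₁ : AddSubgroup H // Nonempty (H₁ ≃+ Z) ∧ Nonempty ((H ⧸ H₁) ≃+ A)} *
        (Nat.card (Z ≃+ Z) * Nat.card (A ≃+ A)) := by
  have hfiber (H₁ : AddSubgroup H) (h : Nonempty ((H₁ ≃+ Z) × ((H ⧸ H₁) ≃+ A))) :
      Nat.card ((H₁ ≃+ Z) × ((H ⧸ H₁) ≃+ A)) = Nat.card (Z ≃+ Z) * Nat.card (A ≃+ A) := by
    obtain ⟨e, q⟩ := h.some
    rw [Nat.card_prod, Nat.card_addEquiv_eq_card_aut ⟨e⟩, Nat.card_addEquiv_eq_card_aut ⟨q⟩]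
  rw [← Nat.card_eq_of_bijective _ bijective_ofSubgroup,
    Nat.card_sigma_of_card_eq_of_nonempty _ _ hfiber]
  simp only [nonempty_prod]

end ShortExactSeq

lemma card_normalizedSections {p : H →+ A} (hp : Function.Surjective p) [Finite A] :
    Nat.card {s : A → H // (∀ a, p (s a) = a) ∧ s 0 = 0} =
      Nat.card p.ker ^ (Nat.card A - 1) := by
  let s₀ := Function.surjInv hp
  have hs₀ : ∀ a, p (s₀ a) = a := Function.surjInv_eq hp
  have hmem (s : A → H) (hs : ∀ a, p (s a) = a) (a : A) : s a - s₀ a ∈ p.ker := by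
    simp [hs, hs₀]
  let e : {s : A → H // (∀ a, p (s a) = a) ∧ s 0 = 0} ≃
      {t : A → p.ker // t 0 = ⟨-s₀ 0, by simp [hs₀]⟩} :=
    { toFun s := ⟨fun a => ⟨_, hmem s.1 s.2.1 a⟩, by ext; simp [s.2.2]⟩
      invFun t := ⟨fun a => t.1 a + s₀ a,
        fun a => by simp [hs₀, AddMonoidHom.mem_ker.mp (t.1 a).2], by simp [t.2]⟩
      left_inv s := by ext; simp
      right_inv t := by ext; simp }
  rw [Nat.card_congr e, Nat.card_subtype_apply_eq]

namespace SectionedShortExactSeq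

def equivSigma : SectionedShortExactSeq Z H A ≃
    Σ d : ShortExactSeq Z H A, {s : A → H // (∀ a, d.proj (s a) = a) ∧ s 0 = 0} where
  toFun x := ⟨x.toShortExactSeq, x.sec, x.proj_sec, x.sec_zero⟩
  invFun x := ⟨x.1, x.2.1, x.2.2.1, x.2.2.2⟩

lemma card_eq [Finite Z] [Finite H] [Finite A] :
    Nat.card (SectionedShortExactSeq Z H A) =
      Nat.card (ShortExactSeq Z H A) * Nat.card Z ^ (Nat.card A - 1) := by
  have := Fintype.ofFinite (ShortExactSeq Z H A)
  have hker (d : ShortExactSeq Z H A) : Nat.card d.proj.ker = Nat.card Z := by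
    rw [← d.range_inl]
    exact Nat.card_congr (AddMonoidHom.ofInjective d.inl_injective).toEquiv.symm
  simp only [Nat.card_congr equivSigma, Nat.card_sigma,
    card_normalizedSections (ShortExactSeq.proj_surjective _), hker, sum_const, card_univ,
    smul_eq_mul, Nat.card_eq_fintype_card]

end SectionedShortExactSeq

end ShortExactSeq

section Extension

variable {Z H A : Type*} [AddCommGroup Z] [AddCommGroup H] [AddCommGroup A]

@[ext]
structure SymmCocycle.Ext (f : SymmCocycle A Z) where
  fst : Z
  snd : A

namespace SymmCocycle.Ext

variable (f : SymmCocycle A Z)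

instance : Add f.Ext := ⟨fun x y => ⟨x.fst + y.fst + f.1 x.snd y.snd, x.snd + y.snd⟩⟩
instance : Zero f.Ext := ⟨⟨0, 0⟩⟩
instance : Neg f.Ext := ⟨fun x => ⟨-x.fst - f.1 x.snd (-x.snd), -x.snd⟩⟩

variable {f}

@[simp] lemma fst_add (x y : f.Ext) : (x + y).fst = x.fst + y.fst + f.1 x.snd y.snd := rfl
@[simp] lemma snd_add (x y : f.Ext) : (x + y).snd = x.snd + y.snd := rfl
@[simp] lemma fst_zero : (0 : f.Ext).fst = 0 := rfl
@[simp] lemma snd_zero : (0 : f.Ext).snd = 0 := rfl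
@[simp] lemma fst_neg (x : f.Ext) : (-x).fst = -x.fst - f.1 x.snd (-x.snd) := rfl
@[simp] lemma snd_neg (x : f.Ext) : (-x).snd = -x.snd := rfl

instance : AddCommGroup f.Ext where
  add_assoc x y z := by
    ext
    · simp only [fst_add, snd_add]
      linear_combination (norm := abel) f.2.add_assoc x.snd y.snd z.snd
    · exact add_assoc _ _ _
  zero_add x := by ext <;> simp [f.2.zero_left]
  add_zero x := by ext <;> simp [f.2.zero_right]
  neg_add_cancel x := by
    ext
    · simp only [fst_add, fst_neg, snd_neg, fst_zero, f.2.comm (-x.snd)]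
      abel
    · exact neg_add_cancel _
  add_comm x y := by ext <;> simp [f.2.comm x.snd, add_comm]
  nsmul := nsmulRec
  zsmul := zsmulRec

def equivProd : f.Ext ≃ Z × A where
  toFun x := (x.fst, x.snd)
  invFun x := ⟨x.1, x.2⟩

instance [Finite A] [Finite Z] : Finite f.Ext := .of_equiv _ equivProd.symm

lemma card [Finite A] [Finite Z] : Nat.card f.Ext = Nat.card Z * Nat.card A := by
  rw [Nat.card_congr equivProd, Nat.card_prod]

variable (f)

def inl : Z →+ f.Ext where
  toFun z := ⟨z, 0⟩
  map_zero' := rfl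
  map_add' z z' := by ext <;> simp [f.2.zero_left]

def proj : f.Ext →+ A where
  toFun x := x.snd
  map_zero' := rfl
  map_add' _ _ := rfl

def sec (a : A) : f.Ext := ⟨0, a⟩

@[simp] lemma sec_zero : sec f 0 = 0 := rfl

lemma inl_injective : Function.Injective (inl f) := fun _ _ h => congrArg Ext.fst h

lemma inl_add_sec (z : Z) (a : A) : inl f z + sec f a = ⟨z, a⟩ := by
  ext <;> simp [inl, sec, f.2.zero_left]

lemma sec_add_sec (a b : A) : sec f a + sec f b = inl f (f.1 a b) + sec f (a + b) := by
  rw [inl_add_sec]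
  ext <;> simp [sec]

def toSectioned (φ : f.Ext ≃+ H) : SectionedShortExactSeq Z H A where
  inl := φ.toAddMonoidHom.comp (inl f)
  proj := (proj f).comp φ.symm.toAddMonoidHom
  inl_injective := φ.injective.comp (inl_injective f)
  proj_surjective a := ⟨φ (sec f a), by simp [proj, sec]⟩
  exact h := by
    refine ⟨fun hh => ⟨(φ.symm h).fst, ?_⟩, ?_⟩
    · have hsnd : (φ.symm h).snd = 0 := hh
      have : inl f (φ.symm h).fst = φ.symm h := by ext <;> simp [inl, hsnd]
      simp [this]
    · rintro ⟨z, rfl⟩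
      simp [inl, proj]
  sec a := φ (sec f a)
  proj_sec a := by simp [proj, sec]
  sec_zero := by simp

end SymmCocycle.Ext

namespace SectionedShortExactSeq

variable (d : SectionedShortExactSeq Z H A)

noncomputable def cocycleFun (a b : A) : Z :=
  Function.invFun d.inl (d.sec a + d.sec b - d.sec (a + b))

lemma inl_cocycleFun (a b : A) :
    d.inl (d.cocycleFun a b) = d.sec a + d.sec b - d.sec (a + b) :=
  Function.invFun_eq <| (d.exact _).mp (by simp [d.proj_sec])

lemma isSymmCocycle_cocycleFun : IsSymmCocycle d.cocycleFun where
  zero_left b := d.inl_injective <| by simp [inl_cocycleFun, d.sec_zero]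
  comm a b := d.inl_injective <| by simp only [inl_cocycleFun, add_comm]
  add_assoc a b c := d.inl_injective <| by
    simp only [map_add, inl_cocycleFun, add_assoc]
    abel

noncomputable def cocycle : SymmCocycle A Z := ⟨d.cocycleFun, d.isSymmCocycle_cocycleFun⟩

def extHom : d.cocycle.Ext →+ H where
  toFun x := d.inl x.fst + d.sec x.snd
  map_zero' := by simp [d.sec_zero]
  map_add' x y := by
    simp only [SymmCocycle.Ext.fst_add, SymmCocycle.Ext.snd_add, map_add]
    rw [show d.cocycle.1 = d.cocycleFun from rfl, inl_cocycleFun]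
    abel

lemma bijective_extHom : Function.Bijective d.extHom := by
  constructor
  · intro x y hxy
    have hsnd : x.snd = y.snd := by
      simpa [extHom, d.proj_sec, d.exact.apply_apply_eq_zero] using congrArg d.proj hxy
    have hfst : d.inl x.fst = d.inl y.fst := by
      simpa [extHom, hsnd] using hxy
    exact SymmCocycle.Ext.ext (d.inl_injective hfst) hsnd
  · intro h
    obtain ⟨z, hz⟩ : ∃ z, d.inl z = h - d.sec (d.proj h) :=
      (d.exact _).mp (by simp [d.proj_sec])
    exact ⟨⟨z, d.proj h⟩, by simp [extHom, hz]⟩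

noncomputable def extEquiv : d.cocycle.Ext ≃+ H :=
  AddEquiv.ofBijective d.extHom d.bijective_extHom

lemma extEquiv_apply (x : d.cocycle.Ext) : d.extEquiv x = d.inl x.fst + d.sec x.snd := rfl

lemma toSectioned_extEquiv : SymmCocycle.Ext.toSectioned d.cocycle d.extEquiv = d := by
  ext x
  · simp [SymmCocycle.Ext.toSectioned, SymmCocycle.Ext.inl, extEquiv_apply, d.sec_zero]
  · obtain ⟨y, rfl⟩ := d.extEquiv.surjective x
    change (d.extEquiv.symm (d.extEquiv y)).snd = d.proj (d.extEquiv y)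
    rw [AddEquiv.symm_apply_apply, extEquiv_apply, map_add, d.proj_sec,
      d.exact.apply_apply_eq_zero, zero_add]
  · simp [SymmCocycle.Ext.toSectioned, SymmCocycle.Ext.sec, extEquiv_apply]

end SectionedShortExactSeq

lemma SymmCocycle.Ext.bijective_toSectioned :
    Function.Bijective fun x : Σ f : SymmCocycle A Z, f.Ext ≃+ H => toSectioned x.1 x.2 := by
  refine ⟨?_, fun d => ⟨⟨d.cocycle, d.extEquiv⟩, d.toSectioned_extEquiv⟩⟩
  rintro ⟨f, φ⟩ ⟨g, ψ⟩ h
  have hinl (z : Z) : φ (inl f z) = ψ (inl g z) :=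
    DFunLike.congr_fun (congrArg (fun d => d.inl) h) z
  have hsec (a : A) : φ (sec f a) = ψ (sec g a) :=
    congrFun (congrArg SectionedShortExactSeq.sec h) a
  have hcocycle {f : SymmCocycle A Z} (φ : f.Ext ≃+ H) (a b : A) :
      φ (inl f (f.1 a b)) = φ (sec f a) + φ (sec f b) - φ (sec f (a + b)) := by
    rw [← map_add, sec_add_sec, map_add, add_sub_cancel_right]
  obtain rfl : f = g := by
    ext a b
    apply φ.injective.comp (inl_injective f)
    simp only [Function.comp_apply, hcocycle, hsec, hinl]
  obtain rfl : φ = ψ := by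
    ext ⟨z, a⟩
    rw [← inl_add_sec, map_add, map_add, hinl, hsec]
  rfl

theorem card_subgroups_mul_card_aut_mul [Finite Z] [Finite H] [Finite A] :
    Nat.card {H₁ : AddSubgroup H // Nonempty (H₁ ≃+ Z) ∧ Nonempty ((H ⧸ H₁) ≃+ A)} *
        (Nat.card (Z ≃+ Z) * Nat.card (A ≃+ A)) * Nat.card Z ^ (Nat.card A - 1) =
      Nat.card {f : SymmCocycle A Z // Nonempty (f.Ext ≃+ H)} * Nat.card (H ≃+ H) := by
  rw [← ShortExactSeq.card_eq, ← SectionedShortExactSeq.card_eq,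
    ← Nat.card_eq_of_bijective _ SymmCocycle.Ext.bijective_toSectioned,
    Nat.card_sigma_of_card_eq_of_nonempty _ _ fun _ => Nat.card_addEquiv_eq_card_aut]

end Extension

namespace FinAbPGroup

variable {p : ℕ}

lemma autCard_pos (G : FinAbPGroup p) : 0 < G.autCard := Nat.card_pos

noncomputable def extension (Z G : FinAbPGroup p) (f : SymmCocycle G.carrier Z.carrier) :
    FinAbPGroup p where
  carrier := f.Ext
  card_isPPow := by
    obtain ⟨a, ha⟩ := Z.card_isPPow
    obtain ⟨b, hb⟩ := G.card_isPPow
    exact ⟨a + b, by rw [SymmCocycle.Ext.card, ha, hb, pow_add]⟩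

noncomputable def extensionClass (Z G : FinAbPGroup p) (f : SymmCocycle G.carrier Z.carrier) :
    FinAbPGroupClass p :=
  ⟦extension Z G f⟧

lemma extensionClass_eq_iff (Z G : FinAbPGroup p) (f : SymmCocycle G.carrier Z.carrier)
    (c : FinAbPGroupClass p) :
    extensionClass Z G f = c ↔ Nonempty (f.Ext ≃+ c.rep.carrier) := by
  conv_lhs => rw [extensionClass, ← Quotient.out_eq c]
  exact Quotient.eq

end FinAbPGroup

theorem cohenLenstra_subgroup_sum_general (p : ℕ) (Z G : FinAbPGroup p) :
    HasSum (fun c : FinAbPGroupClass p =>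
        (subCount c.rep Z G : ℝ) / (c.rep.autCard : ℝ))
      (1 / ((Z.autCard : ℝ) * (G.autCard : ℝ))) := by
  set W := Nat.card Z.carrier ^ (Nat.card G.carrier - 1)
  have hW : (W : ℝ) ≠ 0 := by
    have := Nat.card_pos (α := Z.carrier)
    positivity
  have hZ : (Z.autCard : ℝ) ≠ 0 := by exact_mod_cast Z.autCard_pos.ne'
  have hG : (G.autCard : ℝ) ≠ 0 := by exact_mod_cast G.autCard_pos.ne'
  have hterm (c : FinAbPGroupClass p) : (subCount c.rep Z G : ℝ) / c.rep.autCard =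
      Nat.card {f // FinAbPGroup.extensionClass Z G f = c} / (Z.autCard * G.autCard * W) := by
    have hH : (c.rep.autCard : ℝ) ≠ 0 := by exact_mod_cast c.rep.autCard_pos.ne'
    have hfiber := Nat.card_congr <| Equiv.subtypeEquivRight fun f =>
      FinAbPGroup.extensionClass_eq_iff Z G f c
    rw [div_eq_div_iff hH (by positivity), hfiber, ← mul_assoc]
    exact_mod_cast card_subgroups_mul_card_aut_mul
  have hsum := (hasSum_natCard_fiber (R := ℝ) (FinAbPGroup.extensionClass Z G)).div_const
    (Z.autCard * G.autCard * W)
  have hval : (W : ℝ) / (Z.autCard * G.autCard * W) = 1 / (Z.autCard * G.autCard) := by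
    field_simp
  rw [SymmCocycle.card, hval] at hsum
  simpa only [hterm] using hsum

/-- Cohen–Lenstra: `Σ_H |{H₁ ≤ H : H₁ ≅ Z, H/H₁ ≅ G}|/|Aut(H)| = 1/(|Aut(Z)|·|Aut(G)|)`. -/
theorem cohenLenstra_subgroup_sum (p : ℕ) (hp : p.Prime) (Z G : FinAbPGroup p) :
    HasSum (fun c : FinAbPGroupClass p =>
        (subCount c.rep Z G : ℝ) / (c.rep.autCard : ℝ))
      (1 / ((Z.autCard : ℝ) * (G.autCard : ℝ))) :=
  cohenLenstra_subgroup_sum_general p Z G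
end
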